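/- arXiv:2306.12755 — 3 statements merged into one kernel-verified Lean document; each statement's English description precedes it below -/
import Mathlib

section
/- Performance difference from dynamics mismatch: for a fixed policy π and two MDPs differing only in transition kernels T and T̂ (same bounded reward |r| ≤ R_max and initial distribution), the difference of expected discounted returns satisfies |J_T(π) − J_{T̂}(π)| ≤ (γ R_max/(1−γ)²) max_{(s,a)} Σ_{s'}|T(s'|s,a) − T̂(s'|s,a)|. -/
/-- Policy-evaluation Bellman operator induced by a transition kernel `T`. -/
noncomputable def bellman {S A : Type*} [Fintype S] [Fintype A]
    (r : S → A → ℝ) (γ : ℝ) (T : S → A → S → ℝ) (π : S → A → ℝ)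
    (Q : S → A → ℝ) (s : S) (a : A) : ℝ :=
  r s a + γ * ∑ s' : S, T s a s' * ∑ a' : A, π s' a' * Q s' a'

/-- Weighted average bound. -/
lemma wavg_abs_le {ι : Type*} [Fintype ι] (w v : ι → ℝ) (C : ℝ)
    (hw : ∀ i, 0 ≤ w i) (hsum : ∑ i, w i = 1) (hv : ∀ i, |v i| ≤ C) :
    |∑ i, w i * v i| ≤ C := by
  calc |∑ i, w i * v i| ≤ ∑ i, |w i * v i| := Finset.abs_sum_le_sum_abs _ _
    _ ≤ ∑ i, w i * C := by
        refine Finset.sum_le_sum fun i _ => ?_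
        rw [abs_mul, abs_of_nonneg (hw i)]
        exact mul_le_mul_of_nonneg_left (hv i) (hw i)
    _ = C := by rw [← Finset.sum_mul, hsum, one_mul]

lemma l1_abs_le {ι : Type*} [Fintype ι] (f v : ι → ℝ) (C : ℝ)
    (hv : ∀ i, |v i| ≤ C) :
    |∑ i, f i * v i| ≤ (∑ i, |f i|) * C := by
  calc |∑ i, f i * v i| ≤ ∑ i, |f i * v i| := Finset.abs_sum_le_sum_abs _ _
    _ ≤ ∑ i, |f i| * C := by
        refine Finset.sum_le_sum fun i _ => ?_
        rw [abs_mul]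
        exact mul_le_mul_of_nonneg_left (hv i) (abs_nonneg _)
    _ = (∑ i, |f i|) * C := (Finset.sum_mul _ _ _).symm

/-- Performance difference from dynamics mismatch:
`|J_T(π) − J_{T̂}(π)| ≤ γ R_max/(1−γ)² · max_{(s,a)} ‖T(·|s,a) − T̂(·|s,a)‖₁`,
where `J_P(π) = E_{s∼p₀, a∼π(·|s)}[Q^π_P(s,a)]`. -/
theorem stmt11 {S A : Type*} [Fintype S] [Fintype A]
    (r : S → A → ℝ) (γ : ℝ) (T That : S → A → S → ℝ)
    (π : S → A → ℝ) (p₀ : S → ℝ) (Q Qhat : S → A → ℝ) (Rmax D : ℝ)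
    (hγ0 : 0 ≤ γ) (hγ1 : γ < 1)
    (hr : ∀ s a, |r s a| ≤ Rmax)
    (hT : ∀ s a s', 0 ≤ T s a s') (hTsum : ∀ s a, ∑ s' : S, T s a s' = 1)
    (hThat : ∀ s a s', 0 ≤ That s a s') (hThatsum : ∀ s a, ∑ s' : S, That s a s' = 1)
    (hπ : ∀ s a, 0 ≤ π s a) (hπsum : ∀ s, ∑ a : A, π s a = 1)
    (hp₀ : ∀ s, 0 ≤ p₀ s) (hp₀sum : ∑ s : S, p₀ s = 1)
    (hQ : ∀ s a, Q s a = bellman r γ T π Q s a)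
    (hQhat : ∀ s a, Qhat s a = bellman r γ That π Qhat s a)
    (hD : ∀ s a, ∑ s' : S, |T s a s' - That s a s'| ≤ D) :
    |(∑ s : S, p₀ s * ∑ a : A, π s a * Q s a) -
        ∑ s : S, p₀ s * ∑ a : A, π s a * Qhat s a| ≤
      γ * Rmax / (1 - γ) ^ 2 * D := by
  have hg : (0:ℝ) < 1 - γ := by linarith
  -- S nonempty
  have hS : Nonempty S := by
    by_contra h
    haveI := not_nonempty_iff.mp h
    simp at hp₀sum
  have hA : Nonempty A := by
    by_contra h
    haveI := not_nonempty_iff.mp h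
    have := hπsum (Classical.arbitrary S)
    simp at this
  obtain ⟨s₀⟩ := hS
  obtain ⟨a₀⟩ := hA
  have hRmax : 0 ≤ Rmax := (abs_nonneg _).trans (hr s₀ a₀)
  have hD0 : 0 ≤ D :=
    le_trans (Finset.sum_nonneg fun _ _ => abs_nonneg _) (hD s₀ a₀)
  -- maximizer of |Q|
  obtain ⟨⟨sC, aC⟩, -, hCmax⟩ := Finset.exists_max_image
    (Finset.univ ×ˢ Finset.univ) (fun p : S × A => |Q p.1 p.2|)
    ⟨(s₀, a₀), by simp⟩
  set C := |Q sC aC| with hCdef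
  have hCb : ∀ s a, |Q s a| ≤ C := fun s a => hCmax (s, a) (by simp)
  have hC0 : 0 ≤ C := abs_nonneg _
  -- C ≤ Rmax + γ C
  have hCbound : (1 - γ) * C ≤ Rmax := by
    have hinner : ∀ s' : S, |∑ a' : A, π s' a' * Q s' a'| ≤ C := fun s' =>
      wavg_abs_le _ _ _ (hπ s') (hπsum s') (fun a' => hCb s' a')
    have houter : |∑ s' : S, T sC aC s' * ∑ a' : A, π s' a' * Q s' a'| ≤ C :=
      wavg_abs_le _ _ _ (hT sC aC) (hTsum sC aC) hinner
    have : C ≤ Rmax + γ * C := by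
      calc C = |Q sC aC| := rfl
        _ = |r sC aC + γ * ∑ s' : S, T sC aC s' * ∑ a' : A, π s' a' * Q s' a'| := by
            rw [hQ sC aC]; rfl
        _ ≤ |r sC aC| + |γ * ∑ s' : S, T sC aC s' * ∑ a' : A, π s' a' * Q s' a'| :=
            abs_add_le _ _
        _ ≤ Rmax + γ * C := by
            refine add_le_add (hr sC aC) ?_
            rw [abs_mul, abs_of_nonneg hγ0]
            exact mul_le_mul_of_nonneg_left houter hγ0
    linarith
  -- maximizer of |Q - Qhat|
  obtain ⟨⟨sE, aE⟩, -, hEmax⟩ := Finset.exists_max_image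
    (Finset.univ ×ˢ Finset.univ) (fun p : S × A => |Q p.1 p.2 - Qhat p.1 p.2|)
    ⟨(s₀, a₀), by simp⟩
  set E := |Q sE aE - Qhat sE aE| with hEdef
  have hEb : ∀ s a, |Q s a - Qhat s a| ≤ E := fun s a => hEmax (s, a) (by simp)
  have hE0 : 0 ≤ E := abs_nonneg _
  have hEbound : (1 - γ) * E ≤ γ * D * C := by
    have hinnerQ : ∀ s' : S, |∑ a' : A, π s' a' * Q s' a'| ≤ C := fun s' =>
      wavg_abs_le _ _ _ (hπ s') (hπsum s') (fun a' => hCb s' a')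
    have hinnerE : ∀ s' : S,
        |∑ a' : A, π s' a' * (Q s' a' - Qhat s' a')| ≤ E := fun s' =>
      wavg_abs_le _ _ _ (hπ s') (hπsum s') (fun a' => hEb s' a')
    have key : E ≤ γ * (D * C + E) := by
      have hsplit : Q sE aE - Qhat sE aE =
          γ * ((∑ s' : S, (T sE aE s' - That sE aE s') * ∑ a' : A, π s' a' * Q s' a')
            + ∑ s' : S, That sE aE s' * ∑ a' : A, π s' a' * (Q s' a' - Qhat s' a')) := by
        have hxy : ∀ s' : S, ∑ a' : A, π s' a' * (Q s' a' - Qhat s' a') =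
            (∑ a' : A, π s' a' * Q s' a') - ∑ a' : A, π s' a' * Qhat s' a' := fun s' => by
          simp [mul_sub, Finset.sum_sub_distrib]
        rw [hQ sE aE, hQhat sE aE]
        simp only [bellman, hxy, sub_mul, mul_sub, Finset.sum_add_distrib,
          Finset.sum_sub_distrib]
        ring
      have h1 : |∑ s' : S, (T sE aE s' - That sE aE s') *
          ∑ a' : A, π s' a' * Q s' a'| ≤ D * C := by
        calc |∑ s' : S, (T sE aE s' - That sE aE s') * ∑ a' : A, π s' a' * Q s' a'|
            ≤ (∑ s' : S, |T sE aE s' - That sE aE s'|) * C :=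
              l1_abs_le _ _ _ hinnerQ
          _ ≤ D * C := mul_le_mul_of_nonneg_right (hD sE aE) hC0
      have h2 : |∑ s' : S, That sE aE s' *
          ∑ a' : A, π s' a' * (Q s' a' - Qhat s' a')| ≤ E :=
        wavg_abs_le _ _ _ (hThat sE aE) (hThatsum sE aE) hinnerE
      calc E = |Q sE aE - Qhat sE aE| := rfl
        _ = γ * |(∑ s' : S, (T sE aE s' - That sE aE s') * ∑ a' : A, π s' a' * Q s' a')
            + ∑ s' : S, That sE aE s' * ∑ a' : A, π s' a' * (Q s' a' - Qhat s' a')| := by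
            rw [hsplit, abs_mul, abs_of_nonneg hγ0]
        _ ≤ γ * (D * C + E) := by
            refine mul_le_mul_of_nonneg_left ?_ hγ0
            exact le_trans (abs_add_le _ _) (add_le_add h1 h2)
    nlinarith
  -- final bound
  have hLHS : |(∑ s : S, p₀ s * ∑ a : A, π s a * Q s a) -
      ∑ s : S, p₀ s * ∑ a : A, π s a * Qhat s a| ≤ E := by
    have heq : (∑ s : S, p₀ s * ∑ a : A, π s a * Q s a) -
        ∑ s : S, p₀ s * ∑ a : A, π s a * Qhat s a =
        ∑ s : S, p₀ s * ∑ a : A, π s a * (Q s a - Qhat s a) := by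
      rw [← Finset.sum_sub_distrib]
      refine Finset.sum_congr rfl fun s _ => ?_
      rw [← mul_sub, ← Finset.sum_sub_distrib]
      congr 1
      refine Finset.sum_congr rfl fun a _ => ?_
      ring
    rw [heq]
    exact wavg_abs_le _ _ _ hp₀ hp₀sum
      (fun s => wavg_abs_le _ _ _ (hπ s) (hπsum s) (fun a => hEb s a))
  rw [div_mul_eq_mul_div, le_div_iff₀ (by positivity)]
  nlinarith [hLHS, hEbound, hCbound, abs_nonneg ((∑ s : S, p₀ s * ∑ a : A, π s a * Q s a) -
      ∑ s : S, p₀ s * ∑ a : A, π s a * Qhat s a), mul_nonneg hγ0 hD0]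
end

section
/- Reward modification identity: for densities over transitions, the DARA-modified reward r + log[q(target|s,a,s')/q(source|s,a,s')] − log[q(target|s,a)/q(source|s,a)] equals r + log[T_target(s'|s,a)/T_source(s'|s,a)] when the classifiers are Bayes-optimal with equal class priors, i.e., q(target|s,a,s') = p_target(s,a,s')/(p_target(s,a,s') + p_source(s,a,s')) and analogously for q(target|s,a), where p_domain(s,a,s') = p_domain(s,a) T_domain(s'|s,a). -/
/-- DARA reward-modification identity: with Bayes-optimal classifiers (equal class
priors) `q(target|s,a,s') = p_t(s,a,s')/(p_t(s,a,s') + p_s(s,a,s'))` and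
`q(target|s,a) = p_t(s,a)/(p_t(s,a) + p_s(s,a))`, where
`p_domain(s,a,s') = p_domain(s,a) T_domain(s'|s,a)`, the modified reward equals
`r + log(T_target(s'|s,a)/T_source(s'|s,a))`. -/
theorem stmt17 {S A : Type*}
    (r : S → A → ℝ)
    (pt ps : S → A → ℝ)                 -- marginals p_target(s,a), p_source(s,a)
    (Tt Ts : S → A → S → ℝ)             -- kernels T_target, T_source
    (hpt : ∀ s a, 0 < pt s a) (hps : ∀ s a, 0 < ps s a)
    (hTt : ∀ s a s', 0 < Tt s a s') (hTs : ∀ s a s', 0 < Ts s a s') :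
    ∀ s a s',
      r s a +
        Real.log
          (((pt s a * Tt s a s') / (pt s a * Tt s a s' + ps s a * Ts s a s')) /
            ((ps s a * Ts s a s') / (pt s a * Tt s a s' + ps s a * Ts s a s'))) -
        Real.log ((pt s a / (pt s a + ps s a)) / (ps s a / (pt s a + ps s a))) =
      r s a + Real.log (Tt s a s' / Ts s a s') := by
  intro s a s'
  have hD : pt s a * Tt s a s' + ps s a * Ts s a s' ≠ 0 :=
    ne_of_gt (add_pos (mul_pos (hpt s a) (hTt s a s')) (mul_pos (hps s a) (hTs s a s')))
  have hE : pt s a + ps s a ≠ 0 := ne_of_gt (add_pos (hpt s a) (hps s a))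
  have hpt' := (hpt s a).ne'
  have hps' := (hps s a).ne'
  have hTt' := (hTt s a s').ne'
  have hTs' := (hTs s a s').ne'
  have h1 : ((pt s a * Tt s a s') / (pt s a * Tt s a s' + ps s a * Ts s a s')) /
      ((ps s a * Ts s a s') / (pt s a * Tt s a s' + ps s a * Ts s a s')) =
      (pt s a * Tt s a s') / (ps s a * Ts s a s') := by
    field_simp
  have h2 : (pt s a / (pt s a + ps s a)) / (ps s a / (pt s a + ps s a)) =
      pt s a / ps s a := by
    field_simp
  rw [h1, h2, Real.log_div (mul_pos (hpt s a) (hTt s a s')).ne' (mul_pos (hps s a) (hTs s a s')).ne',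
      Real.log_div hpt' hps', Real.log_div hTt' hTs',
      Real.log_mul hpt' hTt', Real.log_mul hps' hTs']
  ring
end

section
/- Fixed-point error of the penalized Bellman iteration: in the tabular setting, the iteration Q_{k+1}(s,a) = T^π Q_k(s,a) − α c(s,a) (with penalty c ≥ 0 bounded and α ≥ 0) converges to a unique fixed point Q_α satisfying Q_α = Q^π − α (I − γ P^π)^{-1} c, where P^π is the state-action transition matrix under π; in particular Q_α ≤ Q^π pointwise, i.e., the conservative penalty yields underestimation. -/
/-- One-step state-action expectation operator `P^π`: `(P^π f)(s,a) =
Σ_{s'} T(s'|s,a) Σ_{a'} π(a'|s') f(s',a')`. -/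
noncomputable def Pop {S A : Type*} [Fintype S] [Fintype A]
    (T : S → A → S → ℝ) (π : S → A → ℝ) (f : S → A → ℝ) : S → A → ℝ :=
  fun s a => ∑ s' : S, T s a s' * ∑ a' : A, π s' a' * f s' a'

section Aux
variable {S A : Type*} [Fintype S] [Fintype A]
  (T : S → A → S → ℝ) (π : S → A → ℝ)

noncomputable def PopL : (S → A → ℝ) →ₗ[ℝ] (S → A → ℝ) where
  toFun := Pop T π
  map_add' f g := by
    funext s a
    simp only [Pop, Pi.add_apply, mul_add, Finset.sum_add_distrib]
  map_smul' m f := by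
    funext s a
    simp only [Pop, Pi.smul_apply, smul_eq_mul, RingHom.id_apply, Finset.mul_sum]
    refine Finset.sum_congr rfl fun s' _ => Finset.sum_congr rfl fun a' _ => by ring

lemma Pop_mono (hT : ∀ s a s', 0 ≤ T s a s') (hπ : ∀ s a, 0 ≤ π s a)
    {f g : S → A → ℝ} (h : ∀ s a, f s a ≤ g s a) :
    ∀ s a, Pop T π f s a ≤ Pop T π g s a := by
  intro s a
  apply Finset.sum_le_sum
  intro s' _
  apply mul_le_mul_of_nonneg_left _ (hT s a s')
  apply Finset.sum_le_sum
  intro a' _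
  exact mul_le_mul_of_nonneg_left (h s' a') (hπ s' a')

lemma Pop_const (hTsum : ∀ s a, ∑ s' : S, T s a s' = 1)
    (hπsum : ∀ s, ∑ a : A, π s a = 1) (m : ℝ) :
    ∀ s a, Pop T π (fun _ _ => m) s a = m := by
  intro s a
  simp only [Pop]
  have : ∀ s' : S, T s a s' * ∑ a' : A, π s' a' * m = T s a s' * m := by
    intro s'
    rw [← Finset.sum_mul, hπsum s', one_mul]
  rw [Finset.sum_congr rfl (fun s' _ => this s'), ← Finset.sum_mul, hTsum, one_mul]


lemma Pop_iter_bound (hT : ∀ s a s', 0 ≤ T s a s') (hπ : ∀ s a, 0 ≤ π s a)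
    (hTsum : ∀ s a, ∑ s' : S, T s a s' = 1) (hπsum : ∀ s, ∑ a : A, π s a = 1)
    {c : S → A → ℝ} {M : ℝ} (h0 : ∀ s a, 0 ≤ c s a) (hM : ∀ s a, c s a ≤ M)
    (t : ℕ) : ∀ s a, 0 ≤ (Pop T π)^[t] c s a ∧ (Pop T π)^[t] c s a ≤ M := by
  induction t with
  | zero => intro s a; exact ⟨h0 s a, hM s a⟩
  | succ n ih =>
    intro s a
    rw [Function.iterate_succ_apply']
    constructor
    · have := Pop_mono T π hT hπ (f := fun _ _ => (0:ℝ)) (g := (Pop T π)^[n] c)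
        (fun s a => (ih s a).1) s a
      rwa [Pop_const T π hTsum hπsum 0 s a] at this
    · have := Pop_mono T π hT hπ (f := (Pop T π)^[n] c) (g := fun _ _ => M)
        (fun s a => (ih s a).2) s a
      rwa [Pop_const T π hTsum hπsum M s a] at this

lemma summable_pt (hT : ∀ s a s', 0 ≤ T s a s') (hπ : ∀ s a, 0 ≤ π s a)
    (hTsum : ∀ s a, ∑ s' : S, T s a s' = 1) (hπsum : ∀ s, ∑ a : A, π s a = 1)
    {c : S → A → ℝ} {M : ℝ} (h0 : ∀ s a, 0 ≤ c s a) (hM : ∀ s a, c s a ≤ M)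
    {γ : ℝ} (hγ0 : 0 ≤ γ) (hγ1 : γ < 1) (s : S) (a : A) :
    Summable (fun t : ℕ => γ ^ t * (Pop T π)^[t] c s a) := by
  apply Summable.of_nonneg_of_le
  · intro t
    exact mul_nonneg (pow_nonneg hγ0 t)
      (Pop_iter_bound T π hT hπ hTsum hπsum h0 hM t s a).1
  · intro t
    calc γ ^ t * (Pop T π)^[t] c s a ≤ γ ^ t * M :=
          mul_le_mul_of_nonneg_left (Pop_iter_bound T π hT hπ hTsum hπsum h0 hM t s a).2
            (pow_nonneg hγ0 t)
      _ = M * γ ^ t := by ring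
  · exact (summable_geometric_of_lt_one hγ0 hγ1).mul_left M

lemma neumann (hT : ∀ s a s', 0 ≤ T s a s') (hπ : ∀ s a, 0 ≤ π s a)
    (hTsum : ∀ s a, ∑ s' : S, T s a s' = 1) (hπsum : ∀ s, ∑ a : A, π s a = 1)
    {c : S → A → ℝ} {M : ℝ} (h0 : ∀ s a, 0 ≤ c s a) (hM : ∀ s a, c s a ≤ M)
    {γ : ℝ} (hγ0 : 0 ≤ γ) (hγ1 : γ < 1) :
    ∀ s a, (∑' t : ℕ, γ ^ t * (Pop T π)^[t] c s a)
      = c s a + γ * Pop T π (fun s a => ∑' t : ℕ, γ ^ t * (Pop T π)^[t] c s a) s a := by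
  set F : ℕ → (S → A → ℝ) := fun t => γ ^ t • (Pop T π)^[t] c with hFdef
  have hFs : ∀ s a, Summable (fun t => F t s a) := by
    intro s a
    simpa [hFdef, smul_eq_mul] using
      summable_pt T π hT hπ hTsum hπsum h0 hM hγ0 hγ1 s a
  have hF : Summable F := by
    rw [Pi.summable]; intro s; rw [Pi.summable]; intro a; exact hFs s a
  have happ : ∀ s a, (∑' t, F t) s a = ∑' t : ℕ, γ ^ t * (Pop T π)^[t] c s a := by
    intro s a
    rw [tsum_apply hF, tsum_apply ((Pi.summable).mp hF s)]
    exact tsum_congr fun t => by simp [hFdef]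
  have hgfun : (fun s a => ∑' t : ℕ, γ ^ t * (Pop T π)^[t] c s a) = ∑' t, F t := by
    funext s a; exact (happ s a).symm
  have hPopF : ∀ t, γ • Pop T π (F t) = F (t + 1) := by
    intro t
    have h1 : Pop T π (F t) = γ ^ t • Pop T π ((Pop T π)^[t] c) := by
      have := (PopL T π).map_smul (γ ^ t) ((Pop T π)^[t] c)
      exact this
    rw [h1, hFdef]
    simp only [smul_smul, Function.iterate_succ_apply']
    ring_nf
  have key2 : γ • Pop T π (∑' t, F t) = ∑' t, F (t + 1) := by
    have h := ContinuousLinearMap.map_tsum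
      (γ • LinearMap.toContinuousLinearMap (PopL T π)) hF
    simp only [ContinuousLinearMap.smul_apply] at h
    calc γ • Pop T π (∑' t, F t) = ∑' t, γ • Pop T π (F t) := h
      _ = ∑' t, F (t + 1) := tsum_congr hPopF
  have hshift : ∑' t, F t = F 0 + ∑' t, F (t + 1) := Summable.tsum_eq_zero_add hF
  have hF0 : F 0 = c := by simp [hFdef]
  have key : (∑' t, F t) = c + γ • Pop T π (∑' t, F t) := by
    rw [key2, ← hF0]; exact hshift
  intro s a
  rw [hgfun, ← happ s a]
  conv_lhs => rw [key]
  simp [Pi.add_apply, Pi.smul_apply, smul_eq_mul]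

lemma fix_diff {r : S → A → ℝ} {γ : ℝ} {c : S → A → ℝ} {α : ℝ}
    {Q1 Q2 : S → A → ℝ}
    (h1 : ∀ s a, Q1 s a = bellman r γ T π Q1 s a - α * c s a)
    (h2 : ∀ s a, Q2 s a = bellman r γ T π Q2 s a - α * c s a) :
    ∀ s a, Q1 s a - Q2 s a = γ * Pop T π (fun s a => Q1 s a - Q2 s a) s a := by
  intro s a
  have hsub := (PopL T π).map_sub Q1 Q2
  have : Pop T π (fun s a => Q1 s a - Q2 s a) s a
      = Pop T π Q1 s a - Pop T π Q2 s a := by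
    have : (fun s a => Q1 s a - Q2 s a) = Q1 - Q2 := by funext s a; simp
    rw [this]
    exact congrFun (congrFun hsub s) a
  rw [this, h1 s a, h2 s a]
  simp only [bellman]
  show _ = γ * (Pop T π Q1 s a - Pop T π Q2 s a)
  simp only [Pop]
  ring

lemma fix_diff2 {r : S → A → ℝ} {γ : ℝ} {c : S → A → ℝ} {α : ℝ}
    {Qπ Q : S → A → ℝ}
    (hQπ : ∀ s a, Qπ s a = bellman r γ T π Qπ s a)
    (hQ : ∀ s a, Q s a = bellman r γ T π Q s a - α * c s a) :
    ∀ s a, Qπ s a - Q s a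
      = γ * Pop T π (fun s a => Qπ s a - Q s a) s a + α * c s a := by
  intro s a
  have hsub := (PopL T π).map_sub Qπ Q
  have hP : Pop T π (fun s a => Qπ s a - Q s a) s a
      = Pop T π Qπ s a - Pop T π Q s a := by
    have h : (fun s a => Qπ s a - Q s a) = Qπ - Q := by funext s a; simp
    rw [h]
    exact congrFun (congrFun hsub s) a
  rw [hP, hQπ s a, hQ s a]
  simp only [bellman]
  show _ = γ * (Pop T π Qπ s a - Pop T π Q s a) + α * c s a
  simp only [Pop]
  ring

end Aux

/-- The penalized Bellman iteration `Q ↦ T^π Q − α c` has a unique fixed point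
`Q_α = Q^π − α Σ_{t≥0} γ^t (P^π)^t c` (i.e. `Q^π − α (I − γ P^π)^{-1} c` via its
Neumann series), and this fixed point underestimates: `Q_α ≤ Q^π` pointwise. -/
theorem stmt19 {S A : Type*} [Fintype S] [Fintype A]
    (r : S → A → ℝ) (γ : ℝ) (T : S → A → S → ℝ) (π : S → A → ℝ)
    (c : S → A → ℝ) (α : ℝ) (Qπ : S → A → ℝ)
    (hγ0 : 0 ≤ γ) (hγ1 : γ < 1)
    (hT : ∀ s a s', 0 ≤ T s a s') (hTsum : ∀ s a, ∑ s' : S, T s a s' = 1)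
    (hπ : ∀ s a, 0 ≤ π s a) (hπsum : ∀ s, ∑ a : A, π s a = 1)
    (hc : ∀ s a, 0 ≤ c s a) (hα : 0 ≤ α)
    (hQπ : ∀ s a, Qπ s a = bellman r γ T π Qπ s a) :
    (∃! Q : S → A → ℝ, ∀ s a, Q s a = bellman r γ T π Q s a - α * c s a) ∧
    (∀ s a, (fun s a => Qπ s a - α * ∑' t : ℕ, γ ^ t * (Pop T π)^[t] c s a) s a =
      bellman r γ T π
        (fun s a => Qπ s a - α * ∑' t : ℕ, γ ^ t * (Pop T π)^[t] c s a) s a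
        - α * c s a) ∧
    (∀ Q : S → A → ℝ, (∀ s a, Q s a = bellman r γ T π Q s a - α * c s a) →
      ∀ s a, Q s a ≤ Qπ s a) := by
  -- bound on c
  have hM : ∀ s a, c s a ≤ ∑ p : S × A, c p.1 p.2 := by
    intro s a
    have := Finset.single_le_sum (f := fun p : S × A => c p.1 p.2)
      (fun p _ => hc p.1 p.2) (Finset.mem_univ (s, a))
    simpa using this
  have hneu := neumann T π hT hπ hTsum hπsum hc hM hγ0 hγ1
  set g : S → A → ℝ := fun s a => ∑' t : ℕ, γ ^ t * (Pop T π)^[t] c s a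
    with hgdef
  have e2 : ∀ s a, g s a = c s a + γ * Pop T π g s a := by
    intro s a
    rw [hgdef]
    exact hneu s a
  -- Part 2: the Neumann-series candidate is a fixed point
  have part2 : ∀ s a, (Qπ s a - α * g s a)
      = bellman r γ T π (fun s a => Qπ s a - α * g s a) s a - α * c s a := by
    intro s a
    have hsub : Pop T π (fun s a => Qπ s a - α * g s a) s a
        = Pop T π Qπ s a - α * Pop T π g s a := by
      have h1 : (fun s a => Qπ s a - α * g s a) = Qπ - α • g := by
        funext s a; simp [smul_eq_mul]
      rw [h1]
      have hs := (PopL T π).map_sub Qπ (α • g)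
      have hm := (PopL T π).map_smul α g
      have : Pop T π (Qπ - α • g) = Pop T π Qπ - α • Pop T π g := by
        show PopL T π (Qπ - α • g) = PopL T π Qπ - α • PopL T π g
        rw [hs, hm]
      rw [this]
      simp [smul_eq_mul]
    have hb : bellman r γ T π (fun s a => Qπ s a - α * g s a) s a
        = r s a + γ * Pop T π (fun s a => Qπ s a - α * g s a) s a := rfl
    rw [hb, hsub]
    have e1 : Qπ s a = r s a + γ * Pop T π Qπ s a := hQπ s a
    have e2' := e2 s a
    nlinarith [e1, e2']
  refine ⟨⟨fun s a => Qπ s a - α * g s a, part2, ?uniq⟩, part2, ?part3⟩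
  case uniq =>
    intro Q hQ
    funext s a
    have hD := fix_diff T π hQ part2
    set D : S → A → ℝ := fun s a => Q s a - (Qπ s a - α * g s a) with hDdef
    have hne : (Finset.univ : Finset (S × A)).Nonempty := ⟨(s, a), Finset.mem_univ _⟩
    set Mx := Finset.univ.sup' hne (fun p : S × A => |D p.1 p.2|) with hMx
    have hle : ∀ s a, |D s a| ≤ Mx := fun s a =>
      Finset.le_sup' (fun p : S × A => |D p.1 p.2|) (Finset.mem_univ (s, a))
    obtain ⟨p, -, hp⟩ := Finset.exists_mem_eq_sup' hne (fun p : S × A => |D p.1 p.2|)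
    have hPopD : |Pop T π D p.1 p.2| ≤ Mx := by
      have hub := Pop_mono T π hT hπ (f := D) (g := fun _ _ => Mx)
        (fun s a => (abs_le.mp (hle s a)).2) p.1 p.2
      have hlb := Pop_mono T π hT hπ (f := fun _ _ => -Mx) (g := D)
        (fun s a => (abs_le.mp (hle s a)).1) p.1 p.2
      rw [Pop_const T π hTsum hπsum] at hub hlb
      rw [abs_le]; exact ⟨hlb, hub⟩
    have hMx0 : 0 ≤ Mx := le_trans (abs_nonneg _) (hle s a)
    have hD' : ∀ s a, D s a = γ * Pop T π D s a := hD
    have hp' : Mx = |D p.1 p.2| := by rw [hMx]; exact hp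
    have hup : Mx ≤ γ * Mx := by
      calc Mx = |D p.1 p.2| := hp'
        _ = γ * |Pop T π D p.1 p.2| := by
            rw [hD' p.1 p.2, abs_mul, abs_of_nonneg hγ0]
        _ ≤ γ * Mx := mul_le_mul_of_nonneg_left hPopD hγ0
    have hzero : Mx ≤ 0 := by nlinarith
    have : |D s a| ≤ 0 := le_trans (hle s a) hzero
    have : D s a = 0 := abs_nonpos_iff.mp this
    have := sub_eq_zero.mp this
    exact this
  case part3 =>
    intro Q hQ s a
    have hD := fix_diff2 T π hQπ hQ
    set D : S → A → ℝ := fun s a => Qπ s a - Q s a with hDdef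
    have hne : (Finset.univ : Finset (S × A)).Nonempty := ⟨(s, a), Finset.mem_univ _⟩
    set m := Finset.univ.inf' hne (fun p : S × A => D p.1 p.2) with hm
    have hle : ∀ s a, m ≤ D s a := fun s a =>
      Finset.inf'_le (fun p : S × A => D p.1 p.2) (Finset.mem_univ (s, a))
    obtain ⟨p, -, hp⟩ := Finset.exists_mem_eq_inf' hne (fun p : S × A => D p.1 p.2)
    have hPopD : m ≤ Pop T π D p.1 p.2 := by
      have := Pop_mono T π hT hπ (f := fun _ _ => m) (g := D) hle p.1 p.2
      rwa [Pop_const T π hTsum hπsum] at this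
    have hD' : ∀ s a, D s a = γ * Pop T π D s a + α * c s a := hD
    have hp' : m = D p.1 p.2 := by rw [hm]; exact hp
    have hlow : γ * m ≤ m := by
      have h1 : γ * m ≤ γ * Pop T π D p.1 p.2 :=
        mul_le_mul_of_nonneg_left hPopD hγ0
      have h2 : 0 ≤ α * c p.1 p.2 := mul_nonneg hα (hc p.1 p.2)
      linarith [hp', hD' p.1 p.2]
    have hm0 : 0 ≤ m := by nlinarith
    have : 0 ≤ D s a := le_trans hm0 (hle s a)
    have : 0 ≤ Qπ s a - Q s a := this
    linarith
end
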